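/- arXiv:1507.04123 — 2 statements merged into one kernel-verified Lean document; each statement's English description precedes it below -/
import Mathlib

section
/- For every k ≥ 0, Ψ([k,x;k]_q) = 1/[k+1]_q, i.e., the Ψ-evaluation of the q-binomial polynomial (1/[k]!_q)·∏_{t=1}^{k}([t]_q + qᵗ x) equals 1/[k+1]_q. -/
open Finset Polynomial PowerSeries

noncomputable section

/-- The variable `q`, viewed as a rational function over `ℚ`. -/
def qv : RatFunc ℚ := RatFunc.X

/-- The Carlitz q-Bernoulli numbers: `β 0 = 1` together with the umbral recurrence
`q·(qβ+1)^n − β_n = [n = 1]` for `n ≥ 1`, where after binomial expansion the powers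
`β^k` are replaced by `β k`. -/
def IsCarlitz (β : ℕ → RatFunc ℚ) : Prop :=
  β 0 = 1 ∧ ∀ n : ℕ, 1 ≤ n →
    qv * (∑ k ∈ Finset.range (n + 1), (n.choose k : RatFunc ℚ) * qv ^ k * β k) - β n
      = if n = 1 then 1 else 0

/-- The q-integer `[m]_q = (q^m − 1)/(q − 1)`, for `m : ℤ`. -/
def qint (m : ℤ) : RatFunc ℚ := (qv ^ m - 1) / (qv - 1)

/-- The q-factorial `[n]!_q`. -/
def qfact (n : ℕ) : RatFunc ℚ := ∏ t ∈ Finset.range n, qint (t + 1)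

/-- The Gaussian binomial coefficient. -/
def qbinom (n k : ℕ) : RatFunc ℚ := qfact n / (qfact k * qfact (n - k))

/-- The linear functional `Ψ` on polynomials in `x`, sending `xⁿ` to `β n`. -/
def Psi (β : ℕ → RatFunc ℚ) (p : Polynomial (RatFunc ℚ)) : RatFunc ℚ :=
  p.sum fun n a => a * β n

/-- The q-binomial polynomial
`[i, x; d]_q = (1/[d]!_q) ∏_{t=1}^{d} ([i−d+t]_q + q^{i−d+t} x)`. -/
def qbase (i d : ℕ) : Polynomial (RatFunc ℚ) :=
  Polynomial.C (qfact d)⁻¹ *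
    ∏ t ∈ Finset.Icc 1 d,
      (Polynomial.C (qint ((i : ℤ) - d + t)) +
        Polynomial.C (qv ^ ((i : ℤ) - d + t)) * Polynomial.X)

/-! The Carlitz recurrence is equivalent to the functional equation
`q Ψ(p(qx + 1)) = Ψ(p) + p'(0) + (q - 1) p(0)` for every polynomial `p`. The substitution
`x ↦ qx + 1` sends the factor `[t]_q + qᵗx` to `[t+1]_q + q^{t+1}x`, and the factor with `t = 0`
is `x` itself, so for `P_k = ∏_{t=1}^k ([t]_q + qᵗx)` it turns `x P_k` into `P_{k+1}`. The
functional equation thus links `Ψ(x P_k)` to `Ψ(P_{k+1})`, while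
`P_{k+1} = [k+1]_q P_k + q^{k+1} x P_k` links it to `Ψ(P_k)`; eliminating `Ψ(x P_k)` gives
`[k+1]_q Ψ(P_k) = [k]!_q` by induction on `k`. -/

lemma qv_ne_zero : qv ≠ 0 := RatFunc.X_ne_zero

lemma qv_pow_sub_one_ne_zero {m : ℕ} (hm : m ≠ 0) : qv ^ m - 1 ≠ 0 := by
  have hpoly : (Polynomial.X ^ m - 1 : ℚ[X]) ≠ 0 := by
    intro h0
    simpa [zero_pow hm] using congrArg (eval 0) h0
  simpa [qv] using RatFunc.algebraMap_ne_zero hpoly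

lemma qv_sub_one_ne_zero : qv - 1 ≠ 0 := by
  simpa using qv_pow_sub_one_ne_zero one_ne_zero

lemma qint_mul_qv_sub_one (m : ℤ) : qint m * (qv - 1) = qv ^ m - 1 :=
  div_mul_cancel₀ _ qv_sub_one_ne_zero

lemma qint_natCast_mul_qv_sub_one (n : ℕ) : qint n * (qv - 1) = qv ^ n - 1 := by
  rw [qint_mul_qv_sub_one, zpow_natCast]

lemma qint_natCast_ne_zero {n : ℕ} (hn : n ≠ 0) : qint n ≠ 0 :=
  left_ne_zero_of_mul (by rw [qint_natCast_mul_qv_sub_one]; exact qv_pow_sub_one_ne_zero hn)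

lemma qfact_ne_zero (k : ℕ) : qfact k ≠ 0 :=
  prod_ne_zero_iff.2 fun t _ => by exact_mod_cast qint_natCast_ne_zero t.succ_ne_zero

lemma qint_zero : qint 0 = 0 := by simp [qint]

lemma qint_add_one (m : ℤ) : qint (m + 1) = qint m + qv ^ m := by
  rw [qint, qint, div_add' _ _ _ qv_sub_one_ne_zero, zpow_add_one₀ qv_ne_zero]
  ring

lemma qfact_succ (k : ℕ) : qfact (k + 1) = qfact k * qint (k + 1) := by
  rw [qfact, qfact, prod_range_succ]

section Psi

variable (β : ℕ → RatFunc ℚ)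

lemma Psi_eq_lsum :
    Psi β = ⇑(lsum fun n => LinearMap.mulRight (RatFunc ℚ) (β n)) :=
  rfl

lemma Psi_add (p r : (RatFunc ℚ)[X]) : Psi β (p + r) = Psi β p + Psi β r := by
  rw [Psi_eq_lsum, map_add]

lemma Psi_C_mul (c : RatFunc ℚ) (p : (RatFunc ℚ)[X]) :
    Psi β (Polynomial.C c * p) = c * Psi β p := by
  rw [← Polynomial.smul_eq_C_mul, Psi_eq_lsum, map_smul, smul_eq_mul]

lemma Psi_sum (s : Finset ℕ) (f : ℕ → (RatFunc ℚ)[X]) :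
    Psi β (∑ i ∈ s, f i) = ∑ i ∈ s, Psi β (f i) := by
  rw [Psi_eq_lsum, map_sum]

lemma Psi_monomial (n : ℕ) (a : RatFunc ℚ) : Psi β (monomial n a) = a * β n :=
  sum_monomial_index a _ (zero_mul _)

lemma Psi_C_mul_X_pow (n : ℕ) (a : RatFunc ℚ) :
    Psi β (Polynomial.C a * Polynomial.X ^ n) = a * β n := by
  rw [C_mul_X_pow_eq_monomial, Psi_monomial]

lemma Psi_qv_mul_X_add_one_pow (n : ℕ) :
    Psi β ((Polynomial.C qv * Polynomial.X + 1) ^ n)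
      = ∑ k ∈ range (n + 1), (n.choose k : RatFunc ℚ) * qv ^ k * β k := by
  rw [add_pow, Psi_sum]
  refine sum_congr rfl fun k _ => ?_
  rw [one_pow, mul_one, mul_pow, ← C_pow, ← C_eq_natCast, mul_right_comm, ← C_mul,
    Psi_C_mul_X_pow, mul_comm (qv ^ k)]

lemma Psi_one : Psi β 1 = β 0 := by
  simpa using Psi_C_mul_X_pow β 0 1

variable {β}

lemma IsCarlitz.qv_mul_Psi_pow (h : IsCarlitz β) (n : ℕ) :
    qv * Psi β ((Polynomial.C qv * Polynomial.X + 1) ^ n)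
      = β n + (if n = 1 then 1 else 0) + if n = 0 then qv - 1 else 0 := by
  rw [Psi_qv_mul_X_add_one_pow]
  rcases Nat.eq_zero_or_pos n with rfl | hn
  · simp [h.1]
  · rw [if_neg hn.ne', ← h.2 n hn]
    ring

lemma IsCarlitz.qv_mul_Psi_comp (h : IsCarlitz β) (p : (RatFunc ℚ)[X]) :
    qv * Psi β (p.comp (Polynomial.C qv * Polynomial.X + 1))
      = Psi β p + p.coeff 1 + (qv - 1) * p.coeff 0 := by
  induction p using Polynomial.induction_on' with
  | add p r hp hr =>
    rw [add_comp, Psi_add, Psi_add, coeff_add, coeff_add, mul_add, hp, hr]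
    ring
  | monomial n a =>
    rw [Polynomial.coeff_monomial, Polynomial.coeff_monomial, ← C_mul_X_pow_eq_monomial,
      mul_comp, C_comp, X_pow_comp, Psi_C_mul, Psi_C_mul_X_pow, mul_left_comm, h.qv_mul_Psi_pow]
    rcases n with _ | _ | n <;> simp <;> ring

end Psi

def qlin (m : ℤ) : (RatFunc ℚ)[X] :=
  Polynomial.C (qint m) + Polynomial.C (qv ^ m) * Polynomial.X

def qprod (k : ℕ) : (RatFunc ℚ)[X] := ∏ t ∈ range k, qlin (t + 1)

lemma qlin_zero : qlin 0 = Polynomial.X := by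
  simp [qlin, qint_zero]

lemma qlin_comp (m : ℤ) : (qlin m).comp (Polynomial.C qv * Polynomial.X + 1) = qlin (m + 1) := by
  simp only [qlin, add_comp, mul_comp, C_comp, X_comp, qint_add_one,
    zpow_add_one₀ qv_ne_zero, C_add, C_mul]
  ring

lemma X_mul_qprod_comp (k : ℕ) :
    (Polynomial.X * qprod k).comp (Polynomial.C qv * Polynomial.X + 1) = qprod (k + 1) := by
  have hX : Polynomial.X * qprod k = ∏ t ∈ range (k + 1), qlin t := by
    rw [prod_range_succ', Nat.cast_zero, qlin_zero, mul_comm, qprod]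
    push_cast
    rfl
  rw [hX, Polynomial.prod_comp]
  exact prod_congr rfl fun t _ => qlin_comp t

lemma qprod_succ (k : ℕ) :
    qprod (k + 1)
      = Polynomial.C (qint (k + 1)) * qprod k
        + Polynomial.C (qv ^ (k + 1)) * (Polynomial.X * qprod k) := by
  rw [qprod, prod_range_succ, ← qprod, qlin, ← zpow_natCast]
  push_cast
  ring

lemma qprod_coeff_zero (k : ℕ) : (qprod k).coeff 0 = qfact k := by
  simp [coeff_zero_eq_eval_zero, qprod, eval_prod, qlin, qfact]

lemma qbase_self (k : ℕ) : qbase k k = Polynomial.C (qfact k)⁻¹ * qprod k := by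
  have hprod : ∏ t ∈ Icc 1 k, qlin t = qprod k := by
    rw [qprod, range_eq_Ico, ← Ico_add_one_right_eq_Icc,
      ← prod_Ico_add' (fun t : ℕ => qlin t) 0 k 1]
    push_cast
    rfl
  simp only [qbase, sub_self, zero_add, ← hprod, qlin]

lemma IsCarlitz.qint_mul_Psi_qprod {β : ℕ → RatFunc ℚ} (h : IsCarlitz β) (k : ℕ) :
    qint (k + 1) * Psi β (qprod k) = qfact k := by
  induction k with
  | zero => simp [qprod, qfact, qint, Psi_one, h.1, qv_sub_one_ne_zero]
  | succ k ih =>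
    have hlin := congrArg (Psi β) (qprod_succ k)
    rw [Psi_add, Psi_C_mul, Psi_C_mul] at hlin
    have hshift := h.qv_mul_Psi_comp (Polynomial.X * qprod k)
    rw [X_mul_qprod_comp, coeff_X_mul, qprod_coeff_zero, coeff_X_mul_zero] at hshift
    apply mul_right_cancel₀ qv_sub_one_ne_zero
    have h1 := qint_natCast_mul_qv_sub_one (k + 1)
    have h2 := qint_natCast_mul_qv_sub_one (k + 1 + 1)
    push_cast at h1 h2 ⊢
    rw [qfact_succ]
    linear_combination
      Psi β (qprod (k + 1)) * h2 - qfact k * h1 + qv ^ (k + 1) * hshift - hlin - ih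

theorem psi_qbase_diag (β : ℕ → RatFunc ℚ) (h : IsCarlitz β) (k : ℕ) :
    Psi β (qbase k k) = 1 / qint (k + 1) := by
  have hP := h.qint_mul_Psi_qprod k
  have hΨ : Psi β (qprod k) ≠ 0 := right_ne_zero_of_mul (hP ▸ qfact_ne_zero k)
  rw [qbase_self, Psi_C_mul, ← hP, mul_inv, inv_mul_cancel_right₀ hΨ, one_div]
end
end

section
/- For n ≥ 1, Ψ(Pₙ(x)) = 0, where Pₙ(x) = Σ_{k=0}^{n} (q^{−n};q)_k (q^{n+1};q)_k (q(1+(q−1)x);q)_k qᵏ / ((q;q)_k)³. Hence the Carlitz q-Bernoulli numbers βₙ are the moments of this family of orthogonal polynomials of q-Hahn type with parameters c=d=0. -/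
open Finset Polynomial PowerSeries

noncomputable section

/-- The q-Pochhammer symbol `(a; q)_k = (1−a)(1−qa)⋯(1−q^{k−1}a)`. -/
def qPoch (a : RatFunc ℚ) (k : ℕ) : RatFunc ℚ :=
  ∏ j ∈ Finset.range k, (1 - qv ^ j * a)

/-- The polynomial q-Pochhammer symbol `(q(1+(q−1)x); q)_k`. -/
def polyPoch (k : ℕ) : Polynomial (RatFunc ℚ) :=
  ∏ j ∈ Finset.range k,
    (1 - Polynomial.C (qv ^ (j + 1)) * (1 + Polynomial.C (qv - 1) * Polynomial.X))

/-- The q-Hahn-type polynomials `Pₙ` with parameters `c = d = 0`. -/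
def P (n : ℕ) : Polynomial (RatFunc ℚ) :=
  ∑ k ∈ Finset.range (n + 1),
    Polynomial.C (qPoch (qv ^ (-(n : ℤ))) k * qPoch (qv ^ (n + 1)) k * qv ^ k /
      (qPoch qv k) ^ 3) * polyPoch k

/-!
The umbral recurrence for `βₙ`, extended linearly, is the functional equation
`q Ψ(f(qx+1)) − Ψ(f) = (q−1) f(0) + f'(0)`. Since `x ↦ qx+1` sends `1 + (q−1)x` to
`q(1 + (q−1)x)`, it turns `(1−q) x (q(1+(q−1)x);q)_k` into `(q(1+(q−1)x);q)_{k+1}`, and the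
functional equation yields the moments `Ψ((q(1+(q−1)x);q)_k) = (1−q)(q;q)_k / (1−q^{k+1})`.
With these, `Ψ(Pₙ)` is a telescoping sum whose partial sums have a closed form, and that closed
form vanishes at `k = n + 1` because `(q^{−n};q)_{n+1} = 0`.
-/

lemma one_sub_qv_pow_ne_zero {m : ℕ} (hm : m ≠ 0) : (1 : RatFunc ℚ) - qv ^ m ≠ 0 := by
  refine sub_ne_zero.mpr fun h => hm ?_
  have hX : (Polynomial.X : ℚ[X]) ^ m = 1 :=
    RatFunc.algebraMap_injective ℚ (by simpa [qv] using h.symm)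
  simpa using congrArg natDegree hX

lemma qPoch_succ (a : RatFunc ℚ) (k : ℕ) : qPoch a (k + 1) = qPoch a k * (1 - qv ^ k * a) :=
  prod_range_succ _ _

lemma qPoch_qv_ne_zero (k : ℕ) : qPoch qv k ≠ 0 :=
  prod_ne_zero_iff.mpr fun j _ => by
    rw [← pow_succ]
    exact one_sub_qv_pow_ne_zero j.succ_ne_zero

lemma qPoch_qv_pow_neg_eq_zero (n : ℕ) : qPoch (qv ^ (-(n : ℤ))) (n + 1) = 0 :=
  prod_eq_zero (self_mem_range_succ n) <| by
    rw [zpow_neg, zpow_natCast, mul_inv_cancel₀ (pow_ne_zero _ RatFunc.X_ne_zero), sub_self]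

lemma polyPoch_coeff_zero (k : ℕ) : (polyPoch k).coeff 0 = qPoch qv k := by
  rw [Polynomial.coeff_zero_eq_eval_zero, polyPoch, Polynomial.eval_prod]
  exact prod_congr rfl fun j _ => by simp [pow_succ]

lemma polyPoch_succ (k : ℕ) :
    polyPoch (k + 1) = polyPoch k - Polynomial.C (qv ^ (k + 1)) *
      ((1 + Polynomial.C (qv - 1) * Polynomial.X) * polyPoch k) := by
  rw [polyPoch, prod_range_succ, ← polyPoch]
  ring

lemma polyPoch_succ_eq_comp (k : ℕ) :
    polyPoch (k + 1) = (Polynomial.C (1 - qv) * Polynomial.X * polyPoch k).comp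
      (Polynomial.C qv * Polynomial.X + 1) := by
  have hfactor (j : ℕ) :
      (1 - Polynomial.C (qv ^ (j + 1)) * (1 + Polynomial.C (qv - 1) * Polynomial.X)).comp
          (Polynomial.C qv * Polynomial.X + 1) =
        1 - Polynomial.C (qv ^ (j + 1 + 1)) * (1 + Polynomial.C (qv - 1) * Polynomial.X) := by
    simp only [Polynomial.sub_comp, Polynomial.one_comp, Polynomial.mul_comp, Polynomial.C_comp,
      Polynomial.add_comp, Polynomial.X_comp]
    simp only [map_sub, map_one, map_pow]
    ring
  rw [polyPoch, prod_range_succ', Polynomial.mul_comp, Polynomial.mul_comp, Polynomial.C_comp,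
    Polynomial.X_comp, polyPoch, Polynomial.prod_comp, prod_congr rfl fun j _ => hfactor j]
  simp only [map_sub, map_one, zero_add, pow_one]
  ring

def psiLinear (β : ℕ → RatFunc ℚ) : (RatFunc ℚ)[X] →ₗ[RatFunc ℚ] RatFunc ℚ :=
  lsum fun n => LinearMap.mulRight (RatFunc ℚ) (β n)

lemma Psi_eq_psiLinear (β : ℕ → RatFunc ℚ) : Psi β = psiLinear β := rfl

lemma psiLinear_C_mul (β : ℕ → RatFunc ℚ) (c : RatFunc ℚ) (p : (RatFunc ℚ)[X]) :
    psiLinear β (Polynomial.C c * p) = c * psiLinear β p := by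
  rw [Polynomial.C_mul', map_smul, smul_eq_mul]

lemma psiLinear_C_mul_X_pow (β : ℕ → RatFunc ℚ) (a : RatFunc ℚ) (n : ℕ) :
    psiLinear β (Polynomial.C a * Polynomial.X ^ n) = a * β n := by
  rw [Polynomial.C_mul_X_pow_eq_monomial]
  exact Polynomial.sum_monomial_index a _ (zero_mul _)

lemma psiLinear_monomial_comp (β : ℕ → RatFunc ℚ) (a : RatFunc ℚ) (n : ℕ) :
    psiLinear β ((Polynomial.monomial n a).comp (Polynomial.C qv * Polynomial.X + 1)) =
      a * ∑ k ∈ range (n + 1), (n.choose k : RatFunc ℚ) * qv ^ k * β k := by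
  rw [Polynomial.monomial_comp, psiLinear_C_mul, add_pow, map_sum]
  congr 1
  refine sum_congr rfl fun k _ => ?_
  rw [← psiLinear_C_mul_X_pow]
  congr 1
  simp only [one_pow, mul_one, mul_pow, ← Polynomial.C_eq_natCast, map_mul, map_pow]
  ring

namespace IsCarlitz

variable {β : ℕ → RatFunc ℚ} (h : IsCarlitz β)
include h

lemma psiLinear_comp_sub (f : (RatFunc ℚ)[X]) :
    qv * psiLinear β (f.comp (Polynomial.C qv * Polynomial.X + 1)) - psiLinear β f =
      (qv - 1) * f.coeff 0 + f.coeff 1 := by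
  induction f using Polynomial.induction_on' with
  | add p r hp hr =>
    rw [Polynomial.add_comp, map_add, map_add, Polynomial.coeff_add, Polynomial.coeff_add]
    linear_combination hp + hr
  | monomial n a =>
    rw [psiLinear_monomial_comp, ← Polynomial.C_mul_X_pow_eq_monomial, psiLinear_C_mul_X_pow,
      Polynomial.coeff_C_mul_X_pow, Polynomial.coeff_C_mul_X_pow]
    rcases n with _ | n
    · rw [sum_range_one, if_pos rfl, if_neg one_ne_zero, h.1, Nat.choose_self, Nat.cast_one,
        pow_zero]
      ring
    · have hrec := h.2 (n + 1) n.succ_pos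
      rw [if_neg n.succ_ne_zero.symm]
      simp only [@eq_comm ℕ 1]
      split_ifs at hrec ⊢ <;> linear_combination a * hrec

lemma psiLinear_polyPoch (k : ℕ) :
    (1 - qv ^ (k + 1)) * psiLinear β (polyPoch k) = (1 - qv) * qPoch qv k := by
  induction k with
  | zero =>
    have hone := psiLinear_C_mul_X_pow β 1 0
    simp only [map_one, pow_zero, one_mul, h.1] at hone
    simp [polyPoch, qPoch, hone]
  | succ k ih =>
    have hfe := h.psiLinear_comp_sub (Polynomial.C (1 - qv) * Polynomial.X * polyPoch k)
    rw [← polyPoch_succ_eq_comp, mul_assoc, Polynomial.coeff_C_mul, Polynomial.coeff_C_mul,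
      Polynomial.coeff_X_mul, Polynomial.mul_coeff_zero, Polynomial.coeff_X_zero,
      psiLinear_C_mul] at hfe
    have hsucc := congrArg (psiLinear β) (polyPoch_succ k)
    rw [map_sub, psiLinear_C_mul, add_mul, one_mul, map_add, mul_assoc, psiLinear_C_mul] at hsucc
    rw [polyPoch_coeff_zero] at hfe
    rw [qPoch_succ]
    linear_combination hsucc - qv ^ (k + 1) * hfe + ih

lemma psiLinear_polyPoch_eq_div (k : ℕ) :
    psiLinear β (polyPoch k) = (1 - qv) * qPoch qv k / (1 - qv ^ (k + 1)) :=
  eq_div_of_mul_eq (one_sub_qv_pow_ne_zero k.succ_ne_zero) <| by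
    rw [mul_comm, h.psiLinear_polyPoch]

end IsCarlitz

/-- Closed form of the partial sums `∑_{j<k}` of `Ψ` applied to the terms of `P n`
(junk for `n = 0`). -/
def hahnPartialSum (n k : ℕ) : RatFunc ℚ :=
  -(qv ^ n) * (1 - qv) * (1 - qv ^ k) * qPoch (qv ^ (-(n : ℤ))) k * qPoch (qv ^ (n + 1)) k /
    ((qPoch qv k) ^ 2 * (1 - qv ^ n) * (1 - qv ^ (n + 1)))

lemma hahnPartialSum_zero (n : ℕ) : hahnPartialSum n 0 = 0 := by
  simp [hahnPartialSum]

lemma hahnPartialSum_succ_self (n : ℕ) : hahnPartialSum n (n + 1) = 0 := by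
  rw [hahnPartialSum, qPoch_qv_pow_neg_eq_zero, mul_zero, zero_mul, zero_div]

lemma hahnPartialSum_succ_sub {n : ℕ} (hn : n ≠ 0) (k : ℕ) :
    hahnPartialSum n (k + 1) - hahnPartialSum n k =
      qPoch (qv ^ (-(n : ℤ))) k * qPoch (qv ^ (n + 1)) k * qv ^ k / (qPoch qv k) ^ 3 *
        ((1 - qv) * qPoch qv k / (1 - qv ^ (k + 1))) := by
  have hQ := qPoch_qv_ne_zero k
  have hk := one_sub_qv_pow_ne_zero k.succ_ne_zero
  have hn₀ := one_sub_qv_pow_ne_zero hn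
  have hn₁ := one_sub_qv_pow_ne_zero n.succ_ne_zero
  have hq : qv ^ n ≠ 0 := pow_ne_zero _ RatFunc.X_ne_zero
  rw [hahnPartialSum, hahnPartialSum, qPoch_succ, qPoch_succ, qPoch_succ, zpow_neg, zpow_natCast,
    ← pow_succ]
  field_simp
  ring

/-- `Ψ` vanishes on `Pₙ` for `n ≥ 1`: the Carlitz q-Bernoulli numbers are the moments
of the q-Hahn family with parameters `c = d = 0`. -/
theorem psi_qHahn00 (β : ℕ → RatFunc ℚ) (h : IsCarlitz β) (n : ℕ) (hn : 1 ≤ n) :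
    Psi β (P n) = 0 := by
  have hterm (k : ℕ) : psiLinear β (Polynomial.C (qPoch (qv ^ (-(n : ℤ))) k *
      qPoch (qv ^ (n + 1)) k * qv ^ k / (qPoch qv k) ^ 3) * polyPoch k) =
        hahnPartialSum n (k + 1) - hahnPartialSum n k := by
    rw [psiLinear_C_mul, h.psiLinear_polyPoch_eq_div,
      hahnPartialSum_succ_sub (Nat.one_le_iff_ne_zero.mp hn)]
  rw [Psi_eq_psiLinear, P, map_sum, sum_congr rfl fun k _ => hterm k, sum_range_sub,
    hahnPartialSum_succ_self, hahnPartialSum_zero, sub_zero]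
end
end
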